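/- For each i ≥ 1, the group H_i^{Z/2}(Z;Z) is 2-torsion, where Z/2 acts on Z via n ↦ -n. -/

import Mathlib

/-!
If an invariant cycle `c` bounds a chain `b`, then `∑_q q • b` is an invariant chain bounding
`|Q| • c`; so the kernel of `H_i^Q(G) → H_i(G)` is killed by `|Q|`. For `G = ℤ`, `Q = ℤˣ` and
`i ≥ 1` this map is zero: `H_i(ℤ) = 0` for `i ≥ 2`, and `H_1(ℤ) ≅ ℤ` through the weight
`[a] ↦ a`, which negation reverses, so an invariant 1-cycle has weight zero.

The homology of `ℤ` is computed on the homogeneous complex `ℤ[ℤ^{n+1}]`, whose coinvariants under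
translation are the bar complex. There the identity is equivariantly homotopic to the composite `θ`
of the comparison maps through the two-term resolution of `ℤ` over `ℤ[ℤ]`, which vanishes above
degree one and sends an edge to the path between its endpoints; the homotopy descends to the bar
complex.
-/

namespace IGC

noncomputable section
set_option linter.unusedSectionVars false

/-- The group of `n`-chains of the bar complex of `G` with coefficients in `A`
(trivial `G`-action): the free `A`-module on `n`-tuples of elements of `G`. -/
abbrev C (G : Type*) [Group G] (A : Type*) [AddCommGroup A] (n : ℕ) : Type _ :=
  (Fin n → G) →₀ A

/-- The `i`-th face of a bar symbol `[g_1|⋯|g_{n+1}]`. -/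
def barFace {G : Type*} [Group G] {n : ℕ} (i : Fin (n + 2)) (g : Fin (n + 1) → G) :
    Fin n → G := fun j =>
  if (j : ℕ) + 1 < (i : ℕ) then g j.castSucc
  else if (j : ℕ) + 1 = (i : ℕ) then g j.castSucc * g j.succ
  else g j.succ

/-- The boundary map of the bar complex. -/
def barD (G : Type*) [Group G] (A : Type*) [AddCommGroup A] (n : ℕ) :
    C G A (n + 1) →+ C G A n :=
  Finsupp.liftAddHom fun g =>
    { toFun := fun a => ∑ i : Fin (n + 2), Finsupp.single (barFace i g) (((-1 : ℤ) ^ (i : ℕ)) • a)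
      map_zero' := by simp
      map_add' := fun a b => by
        simp [smul_add, Finsupp.single_add, Finset.sum_add_distrib] }

lemma barD_single {G : Type*} [Group G] {A : Type*} [AddCommGroup A] (n : ℕ)
    (g : Fin (n + 1) → G) (a : A) :
    barD G A n (Finsupp.single g a) =
      ∑ i : Fin (n + 2), Finsupp.single (barFace i g) (((-1 : ℤ) ^ (i : ℕ)) • a) := by
  rw [barD, Finsupp.liftAddHom_apply_single]; rfl

/-- The boundary map out of degree `n` (the zero map for `n = 0`). -/
def barDFrom (G : Type*) [Group G] (A : Type*) [AddCommGroup A] :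
    (n : ℕ) → C G A n →+ C G A (n - 1)
  | 0 => 0
  | n + 1 => barD G A n

/-- The chain map on bar complexes induced by a group homomorphism. -/
def chainMapOf (G : Type*) [Group G] (A : Type*) [AddCommGroup A] {H : Type*} [Group H]
    (φ : H →* G) (n : ℕ) : C H A n →+ C G A n :=
  Finsupp.mapDomain.addMonoidHom fun g j => φ (g j)

lemma chainMapOf_single (G : Type*) [Group G] (A : Type*) [AddCommGroup A] {H : Type*} [Group H]
    (φ : H →* G) (n : ℕ) (g : Fin n → H) (a : A) :
    chainMapOf G A φ n (Finsupp.single g a) = Finsupp.single (fun j => φ (g j)) a := by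
  rw [chainMapOf, Finsupp.mapDomain.addMonoidHom_apply, Finsupp.mapDomain_single]

lemma barFace_comp {G : Type*} [Group G] {H : Type*} [Group H] (φ : H →* G) {n : ℕ}
    (i : Fin (n + 2)) (g : Fin (n + 1) → H) :
    (barFace i fun j => φ (g j)) = fun j => φ (barFace i g j) := by
  funext j
  unfold barFace
  split_ifs <;> simp

lemma chainMapOf_barD (G : Type*) [Group G] (A : Type*) [AddCommGroup A] {H : Type*} [Group H]
    (φ : H →* G) (n : ℕ) :
    (barD G A n).comp (chainMapOf G A φ (n + 1)) = (chainMapOf G A φ n).comp (barD H A n) := by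
  apply Finsupp.addHom_ext
  intro g a
  rw [AddMonoidHom.comp_apply, AddMonoidHom.comp_apply, chainMapOf_single, barD_single,
    barD_single, map_sum]
  refine Finset.sum_congr rfl fun i _ => ?_
  rw [chainMapOf_single, barFace_comp]

lemma chainMapOf_comp (G : Type*) [Group G] (A : Type*) [AddCommGroup A]
    {H K : Type*} [Group H] [Group K] (ψ : H →* G) (φ : K →* H) (n : ℕ) :
    (chainMapOf G A ψ n).comp (chainMapOf H A φ n) = chainMapOf G A (ψ.comp φ) n := by
  apply Finsupp.addHom_ext
  intro g a
  rw [AddMonoidHom.comp_apply, chainMapOf_single, chainMapOf_single, chainMapOf_single]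
  rfl

section Action

variable (G : Type*) [Group G] (A : Type*) [AddCommGroup A]
variable (Q : Type*) [Group Q] [Fintype Q] [MulDistribMulAction Q G]

/-- The action of `q : Q` on bar chains. -/
def qMap (q : Q) (n : ℕ) : C G A n →+ C G A n :=
  chainMapOf G A (MulDistribMulAction.toMonoidHom G q) n

/-- The subgroup of `Q`-fixed elements of `G`. -/
def fixedSubgroup : Subgroup G where
  carrier := {g | ∀ q : Q, q • g = g}
  one_mem' := fun q => smul_one q
  mul_mem' := fun ha hb q => by rw [smul_mul', ha q, hb q]
  inv_mem' := fun ha q => by rw [smul_inv', ha q]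

/-- The subcomplex of `Q`-invariant bar chains. -/
def invC (n : ℕ) : AddSubgroup (C G A n) :=
  ⨅ q : Q, (qMap G A Q q n - AddMonoidHom.id (C G A n)).ker

/-- Cycles of the bar complex. -/
def cycles (n : ℕ) : AddSubgroup (C G A n) := (barDFrom G A n).ker

/-- Boundaries of the bar complex. -/
def boundaries (n : ℕ) : AddSubgroup (C G A n) := (barD G A n).range

/-- The group homology `H_n(G;A)` (with trivial action on `A`), computed from the bar complex. -/
abbrev barHomology (n : ℕ) : Type _ :=
  cycles G A n ⧸ (boundaries G A n).addSubgroupOf (cycles G A n)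

/-- `Q`-invariant cycles. -/
def invCycles (n : ℕ) : AddSubgroup (C G A n) := invC G A Q n ⊓ cycles G A n

/-- Boundaries of `Q`-invariant chains. -/
def invBoundaries (n : ℕ) : AddSubgroup (C G A n) := (invC G A Q (n + 1)).map (barD G A n)

/-- `H_n^Q(G;A)`: the homology of the subcomplex of `Q`-invariant bar chains. -/
abbrev invHomology (n : ℕ) : Type _ :=
  invCycles G A Q n ⧸ (invBoundaries G A Q n).addSubgroupOf (invCycles G A Q n)

/-- The map `i_* : H_n^Q(G;A) → H_n(G;A)` induced by the inclusion of complexes. -/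
def inclHom (n : ℕ) : invHomology G A Q n →+ barHomology G A n :=
  QuotientAddGroup.map _ _ (AddSubgroup.inclusion inf_le_right) (by
    intro x hx
    rw [AddSubgroup.mem_addSubgroupOf] at hx
    rw [AddSubgroup.mem_comap, AddSubgroup.mem_addSubgroupOf]
    change (x : C G A n) ∈ boundaries G A n
    obtain ⟨y, -, hy⟩ := hx
    exact ⟨y, hy⟩)

/-- The subgroup `H_n(G;A)^Q` of `Q`-invariant homology classes. -/
def invariantClasses (n : ℕ) : AddSubgroup (barHomology G A n) :=
  ((⨅ q : Q, (boundaries G A n).comap (qMap G A Q q n - AddMonoidHom.id (C G A n))).addSubgroupOf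
    (cycles G A n)).map
      (QuotientAddGroup.mk' ((boundaries G A n).addSubgroupOf (cycles G A n)))

lemma chainMapOf_fixed_mem_invC (n : ℕ) (c : C (fixedSubgroup G Q) A n) :
    chainMapOf G A (fixedSubgroup G Q).subtype n c ∈ invC G A Q n := by
  have key : ∀ q : Q, (qMap G A Q q n).comp (chainMapOf G A (fixedSubgroup G Q).subtype n)
      = chainMapOf G A (fixedSubgroup G Q).subtype n := by
    intro q
    rw [qMap, chainMapOf_comp]
    congr 1
    ext x
    exact x.2 q
  rw [invC, AddSubgroup.mem_iInf]
  intro q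
  rw [AddMonoidHom.mem_ker, AddMonoidHom.sub_apply, sub_eq_zero, AddMonoidHom.id_apply,
    ← AddMonoidHom.comp_apply, key q]


lemma chainMapOf_barDFrom (n : ℕ) (c : C (fixedSubgroup G Q) A n) :
    barDFrom G A n (chainMapOf G A (fixedSubgroup G Q).subtype n c)
      = chainMapOf G A (fixedSubgroup G Q).subtype (n - 1)
          (barDFrom (fixedSubgroup G Q) A n c) := by
  match n with
  | 0 => simp [barDFrom]
  | n + 1 =>
      show (barD G A n) (chainMapOf G A (fixedSubgroup G Q).subtype (n + 1) c) = _
      rw [← AddMonoidHom.comp_apply, chainMapOf_barD]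
      rfl

/-- The map `H_n(G^Q;A) → H_n^Q(G;A)` induced by the inclusion of complexes. -/
def subIncl (n : ℕ) : barHomology (fixedSubgroup G Q) A n →+ invHomology G A Q n :=
  QuotientAddGroup.map _ _
    (((chainMapOf G A (fixedSubgroup G Q).subtype n).comp
        (cycles (fixedSubgroup G Q) A n).subtype).codRestrict (invCycles G A Q n) (by
      intro x
      rw [invCycles, AddSubgroup.mem_inf]
      refine ⟨chainMapOf_fixed_mem_invC G A Q n _, AddMonoidHom.mem_ker.mpr ?_⟩
      rw [AddMonoidHom.comp_apply, AddSubgroup.coe_subtype, chainMapOf_barDFrom,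
        AddMonoidHom.mem_ker.mp x.2, map_zero]))
    (by
      intro x hx
      rw [AddSubgroup.mem_addSubgroupOf] at hx
      obtain ⟨σ, hσ⟩ := hx
      rw [AddSubgroup.mem_comap, AddSubgroup.mem_addSubgroupOf]
      show ((chainMapOf G A (fixedSubgroup G Q).subtype n).comp
        (cycles (fixedSubgroup G Q) A n).subtype) x ∈ invBoundaries G A Q n
      rw [AddMonoidHom.comp_apply, AddSubgroup.coe_subtype, ← hσ, ← AddMonoidHom.comp_apply,
        ← chainMapOf_barD]
      exact ⟨chainMapOf G A (fixedSubgroup G Q).subtype (n + 1) σ,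
        chainMapOf_fixed_mem_invC G A Q (n + 1) σ, rfl⟩)

/-- The subgroup generated by differences `q • c - c`, i.e. the kernel of the map
to the coinvariants (the cellular chains of the quotient space `BG/Q`). -/
def W (n : ℕ) : AddSubgroup (C G A n) :=
  ⨆ q : Q, (qMap G A Q q n - AddMonoidHom.id (C G A n)).range

/-- Cycles of the coinvariants complex (the cellular chain complex of `BG/Q`),
presented as chains whose boundary lies in `W`. -/
def quotCycles (n : ℕ) : AddSubgroup (C G A n) := (W G A Q (n - 1)).comap (barDFrom G A n)

/-- Boundaries of the coinvariants complex, presented in `C_n(G;A)`. -/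
def quotBoundaries (n : ℕ) : AddSubgroup (C G A n) := W G A Q n ⊔ (barD G A n).range

/-- `H_n(BG/Q;A)`: the homology of the coinvariants complex, i.e. of the
cellular chain complex of the quotient CW-complex `BG/Q`. -/
abbrev quotHomology (n : ℕ) : Type _ :=
  quotCycles G A Q n ⧸ (quotBoundaries G A Q n).addSubgroupOf (quotCycles G A Q n)

/-- The image of the norm map `N : C_n(BG/Q) → C_n(G)^Q` sending the class of a
bar symbol to the sum over its `Q`-orbit. -/
def normImage (n : ℕ) : AddSubgroup (C G ℤ n) :=
  letI := Classical.decEq (Fin n → G)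
  AddSubgroup.closure {c | ∃ g : Fin n → G,
    c = ∑ x ∈ Finset.image (fun q : Q => fun j => q • g j) Finset.univ, Finsupp.single x (1 : ℤ)}

/-- The degree-`n` part of the cokernel `D_• = C_•(G)^Q / N(C_•(BG/Q))` of the norm map. -/
abbrev DChains (n : ℕ) : Type _ :=
  invC G ℤ Q n ⧸ (normImage G Q n).addSubgroupOf (invC G ℤ Q n)

/-- Cycles of the quotient complex `D_•`. -/
def DCycles (n : ℕ) : AddSubgroup (C G ℤ n) :=
  invC G ℤ Q n ⊓ (normImage G Q (n - 1)).comap (barDFrom G ℤ n)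

/-- Boundaries of the quotient complex `D_•`. -/
def DBoundaries (n : ℕ) : AddSubgroup (C G ℤ n) :=
  normImage G Q n ⊔ (invC G ℤ Q (n + 1)).map (barD G ℤ n)

/-- `h_n(D_•)`: the homology of the cokernel of the norm map. -/
abbrev DHomology (n : ℕ) : Type _ :=
  DCycles G Q n ⧸ (DBoundaries G Q n).addSubgroupOf (DCycles G Q n)

/-- Cellular cochains of `BG/Q` with `ℤ/2` coefficients: homomorphisms on chains. -/
abbrev Cochain (n : ℕ) : Type _ := C G ℤ n →+ ZMod 2

/-- Cochains vanishing on a subgroup of chains. -/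
def vanishing (n : ℕ) (S : AddSubgroup (C G ℤ n)) : AddSubgroup (Cochain G n) where
  carrier := {f | ∀ c ∈ S, f c = 0}
  zero_mem' := fun c _ => rfl
  add_mem' := fun hf hg c hc => by
    rw [AddMonoidHom.add_apply, hf c hc, hg c hc, add_zero]
  neg_mem' := fun hf c hc => by
    rw [AddMonoidHom.neg_apply, hf c hc, neg_zero]

/-- Precomposition with a boundary map as the coboundary operator. -/
def precomp {n m : ℕ} (d : C G ℤ m →+ C G ℤ n) : Cochain G n →+ Cochain G m :=
  AddMonoidHom.mk' (fun f => f.comp d) (fun f g => by ext c; simp)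

/-- Cocycles of the `ℤ/2`-cochain complex of `BG/Q`. -/
def quotCocycles (q : ℕ) : AddSubgroup (Cochain G q) :=
  vanishing G q (W G ℤ Q q) ⊓ (precomp G (barD G ℤ q)).ker

/-- Coboundaries of the `ℤ/2`-cochain complex of `BG/Q`. -/
def quotCoboundaries (q : ℕ) : AddSubgroup (Cochain G q) :=
  (vanishing G (q - 1) (W G ℤ Q (q - 1))).map (precomp G (barDFrom G ℤ q))

/-- `H^q(BG/Q; ℤ/2)`: the cellular cohomology of the quotient space with `ℤ/2` coefficients. -/
abbrev quotCohomology (q : ℕ) : Type _ :=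
  quotCocycles G Q q ⧸ (quotCoboundaries G Q q).addSubgroupOf (quotCocycles G Q q)

end Action

/-- The action of `ℤˣ ≅ ℤ/2` on a commutative group by inversion (negation):
the nontrivial element acts by `g ↦ g⁻¹`. -/
instance negAction (Γ : Type*) [CommGroup Γ] : MulDistribMulAction ℤˣ Γ where
  smul u g := g ^ (u : ℤ)
  one_smul g := by show g ^ ((1 : ℤˣ) : ℤ) = g; simp
  mul_smul u v g := by
    show g ^ ((↑(u * v) : ℤ)) = (g ^ (v : ℤ)) ^ (u : ℤ)
    rw [Units.val_mul, mul_comm, zpow_mul]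
  smul_mul u a b := mul_zpow a b (u : ℤ)
  smul_one u := one_zpow _

end
end IGC

namespace IGC

section Transfer

variable {G : Type*} [Group G] {A : Type*} [AddCommGroup A]
variable {Q : Type*} [Group Q] [MulDistribMulAction Q G]

lemma qMap_mul (q r : Q) (n : ℕ) :
    qMap G A Q (q * r) n = (qMap G A Q q n).comp (qMap G A Q r n) := by
  rw [qMap, qMap, qMap, chainMapOf_comp]
  congr 1
  ext g
  exact mul_smul q r g

lemma barD_qMap (q : Q) (n : ℕ) (c : C G A (n + 1)) :
    barD G A n (qMap G A Q q (n + 1) c) = qMap G A Q q n (barD G A n c) :=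
  DFunLike.congr_fun (chainMapOf_barD G A _ n) c

lemma mem_invC {n : ℕ} {c : C G A n} : c ∈ invC G A Q n ↔ ∀ q, qMap G A Q q n c = c := by
  simp only [invC, AddSubgroup.mem_iInf, AddMonoidHom.mem_ker, AddMonoidHom.sub_apply,
    AddMonoidHom.id_apply, sub_eq_zero]

variable [Fintype Q]

lemma sum_qMap_mem_invC (n : ℕ) (c : C G A n) : ∑ q : Q, qMap G A Q q n c ∈ invC G A Q n := by
  refine mem_invC.mpr fun r => ?_
  rw [map_sum]
  exact Fintype.sum_equiv (Equiv.mulLeft r) _ _ fun q => by rw [Equiv.coe_mulLeft, qMap_mul]; rfl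

theorem card_nsmul_eq_zero_of_inclHom_eq_zero {n : ℕ} {x : invHomology G A Q n}
    (hx : inclHom G A Q n x = 0) : Fintype.card Q • x = 0 := by
  induction x using QuotientAddGroup.induction_on with
  | H c =>
    obtain ⟨b, hb⟩ : (c : C G A n) ∈ boundaries G A n := by
      rwa [inclHom, QuotientAddGroup.map_mk, QuotientAddGroup.eq_zero_iff,
        AddSubgroup.mem_addSubgroupOf] at hx
    have hc : ∀ q, qMap G A Q q n c = c := mem_invC.mp (inf_le_left (a := invC G A Q n) c.2)
    rw [← QuotientAddGroup.mk_nsmul, QuotientAddGroup.eq_zero_iff, AddSubgroup.mem_addSubgroupOf]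
    refine ⟨_, sum_qMap_mem_invC (n + 1) b, ?_⟩
    simp only [map_sum, barD_qMap, hb, hc, Finset.sum_const, Finset.card_univ,
      AddSubgroup.coe_nsmul]

end Transfer

lemma finsupp_int_addHom_ext {X B : Type*} [AddCommGroup B] {F F' : (X →₀ ℤ) →+ B}
    (h : ∀ x, F (Finsupp.single x 1) = F' (Finsupp.single x 1)) : F = F' :=
  Finsupp.addHom_ext' fun x => AddMonoidHom.ext_int (h x)

noncomputable section Homogeneous

variable {G : Type}

abbrev HomogChains (G : Type) (n : ℕ) : Type _ := (Fin (n + 1) → G) →₀ ℤ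

def homogD (n : ℕ) : HomogChains G (n + 1) →+ HomogChains G n :=
  ((MonoidAlgebra.coeffLinearEquiv ℤ).toLinearMap ∘ₗ Rep.standardComplex.d ℤ G (n + 1) ∘ₗ
    (MonoidAlgebra.coeffLinearEquiv ℤ).symm.toLinearMap).toAddMonoidHom

lemma homogD_single (n : ℕ) (p : Fin (n + 2) → G) (c : ℤ) :
    homogD n (Finsupp.single p c) =
      ∑ i : Fin (n + 2), Finsupp.single (p ∘ i.succAbove) ((-1 : ℤ) ^ (i : ℕ) * c) := by
  simp [homogD, Rep.standardComplex.d_single, mul_comm]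

variable [Group G]

lemma homogD_homogD (n : ℕ) (x : HomogChains G (n + 2)) : homogD n (homogD (n + 1) x) = 0 := by
  have hd : ∀ y : MonoidAlgebra ℤ (Fin (n + 3) → G),
      Rep.standardComplex.d ℤ G (n + 1) (Rep.standardComplex.d ℤ G (n + 2) y) = 0 := fun y => by
    rw [← Rep.standardComplex.d_apply, ← Rep.standardComplex.d_apply]
    exact congrArg (fun f => Rep.Hom.hom f y) ((Rep.standardComplex ℤ G).d_comp_d _ _ _)
  simp [homogD, MonoidAlgebra.ofCoeff_coeff, hd]

def translate (g : G) (n : ℕ) : HomogChains G n →+ HomogChains G n :=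
  Finsupp.mapDomain.addMonoidHom (g • ·)

lemma translate_single (g : G) {n : ℕ} (p : Fin (n + 1) → G) (c : ℤ) :
    translate g n (Finsupp.single p c) = Finsupp.single (g • p) c :=
  Finsupp.mapDomain_single

lemma translate_one {n : ℕ} (x : HomogChains G n) : translate 1 n x = x := by
  simp only [translate, one_smul, Finsupp.mapDomain.addMonoidHom_apply]
  exact Finsupp.mapDomain_id

lemma translate_translate (g h : G) {n : ℕ} (x : HomogChains G n) :
    translate g n (translate h n x) = translate (g * h) n x := by
  simp only [translate, Finsupp.mapDomain.addMonoidHom_apply, ← Finsupp.mapDomain_comp]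
  congr 1
  ext p j
  exact (mul_assoc g h (p j)).symm

lemma homogD_translate (g : G) (n : ℕ) (x : HomogChains G (n + 1)) :
    homogD n (translate g (n + 1) x) = translate g n (homogD n x) := by
  induction x using Finsupp.induction_linear with
  | zero => simp
  | add x y hx hy => simp only [map_add, hx, hy]
  | single p c =>
    simp only [translate_single, homogD_single, map_sum]
    rfl

def cone (n : ℕ) : HomogChains G n →+ HomogChains G (n + 1) :=
  Finsupp.mapDomain.addMonoidHom fun p => (Fin.cons 1 p : Fin (n + 2) → G)

lemma cone_single {n : ℕ} (p : Fin (n + 1) → G) (c : ℤ) :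
    cone n (Finsupp.single p c) = Finsupp.single (Fin.cons 1 p) c :=
  Finsupp.mapDomain_single

lemma homogD_cone (n : ℕ) (y : HomogChains G (n + 1)) :
    homogD (n + 1) (cone (n + 1) y) = y - cone n (homogD n y) := by
  induction y using Finsupp.induction_linear with
  | zero => simp
  | add x y hx hy => simp only [map_add, hx, hy]; abel
  | single p c =>
    have hface : ∀ i : Fin (n + 2),
        (Fin.cons 1 p : Fin (n + 3) → G) ∘ i.succ.succAbove = Fin.cons 1 (p ∘ i.succAbove) := by
      intro i
      ext k
      cases k using Fin.cases <;> simp [Fin.succ_succAbove_succ]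
    rw [cone_single, homogD_single, Fin.sum_univ_succ, homogD_single, map_sum]
    simp only [hface, cone_single, Fin.val_succ, pow_succ, Fin.val_zero, pow_zero, one_mul,
      Fin.succAbove_zero, Fin.cons_comp_succ, mul_neg_one, neg_mul, Finsupp.single_neg,
      Finset.sum_neg_distrib, sub_eq_add_neg]

def barSymbol {n : ℕ} (p : Fin (n + 1) → G) : Fin n → G := fun j => (p j.castSucc)⁻¹ * p j.succ

lemma barSymbol_smul {n : ℕ} (g : G) (p : Fin (n + 1) → G) : barSymbol (g • p) = barSymbol p := by
  ext j
  simp [barSymbol, mul_assoc]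

lemma barSymbol_partialProd {n : ℕ} (a : Fin n → G) : barSymbol (Fin.partialProd a) = a :=
  funext (Fin.partialProd_right_inv a)

lemma barSymbol_comp_succAbove {n : ℕ} (p : Fin (n + 2) → G) (i : Fin (n + 2)) :
    barSymbol (p ∘ i.succAbove) = barFace i (barSymbol p) := by
  ext j
  simp only [barSymbol, barFace, Function.comp_apply]
  split_ifs with h₁ h₂
  · rw [Fin.succAbove_of_castSucc_lt, Fin.succAbove_of_castSucc_lt, Fin.succ_castSucc] <;>
      simp only [Fin.lt_def, Fin.val_castSucc, Fin.val_succ] <;> omega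
  · rw [Fin.succAbove_of_castSucc_lt, Fin.succAbove_of_le_castSucc, Fin.succ_castSucc,
      mul_assoc, mul_inv_cancel_left] <;>
      simp only [Fin.lt_def, Fin.le_def, Fin.val_castSucc, Fin.val_succ] <;> omega
  · rw [Fin.succAbove_of_le_castSucc, Fin.succAbove_of_le_castSucc, Fin.succ_castSucc] <;>
      simp only [Fin.le_def, Fin.val_castSucc, Fin.val_succ] <;> omega

def toBar (n : ℕ) : HomogChains G n →+ C G ℤ n := Finsupp.mapDomain.addMonoidHom barSymbol

def ofBar (n : ℕ) : C G ℤ n →+ HomogChains G n := Finsupp.mapDomain.addMonoidHom Fin.partialProd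

lemma toBar_single {n : ℕ} (p : Fin (n + 1) → G) (c : ℤ) :
    toBar n (Finsupp.single p c) = Finsupp.single (barSymbol p) c :=
  Finsupp.mapDomain_single

lemma ofBar_single {n : ℕ} (a : Fin n → G) (c : ℤ) :
    ofBar n (Finsupp.single a c) = Finsupp.single (Fin.partialProd a) c :=
  Finsupp.mapDomain_single

lemma toBar_ofBar (n : ℕ) (c : C G ℤ n) : toBar n (ofBar n c) = c := by
  simp only [toBar, ofBar, Finsupp.mapDomain.addMonoidHom_apply, ← Finsupp.mapDomain_comp]
  convert Finsupp.mapDomain_id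
  exact funext barSymbol_partialProd

lemma toBar_translate (g : G) (n : ℕ) (x : HomogChains G n) :
    toBar n (translate g n x) = toBar n x := by
  simp only [toBar, translate, Finsupp.mapDomain.addMonoidHom_apply, ← Finsupp.mapDomain_comp]
  congr 1
  exact funext (barSymbol_smul g)

lemma barD_toBar (n : ℕ) (x : HomogChains G (n + 1)) :
    barD G ℤ n (toBar (n + 1) x) = toBar n (homogD n x) := by
  induction x using Finsupp.induction_linear with
  | zero => simp
  | add x y hx hy => simp only [map_add, hx, hy]
  | single p c =>
    simp only [toBar_single, barD_single, homogD_single, map_sum, barSymbol_comp_succAbove,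
      smul_eq_mul]

lemma single_eq_translate_ofBar {n : ℕ} (p : Fin (n + 1) → G) (c : ℤ) :
    Finsupp.single p c = translate (p 0) n (ofBar n (Finsupp.single (barSymbol p) c)) := by
  rw [ofBar_single, translate_single]
  exact congrArg (Finsupp.single · c) (Fin.partialProd_left_inv p).symm

lemma map_ofBar_toBar {n : ℕ} {B : Type*} [AddCommGroup B] (ψ : HomogChains G n →+ B)
    (hψ : ∀ g x, ψ (translate g n x) = ψ x) (x : HomogChains G n) :
    ψ (ofBar n (toBar n x)) = ψ x := by
  induction x using Finsupp.induction_linear with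
  | zero => simp
  | add x y hx hy => simp only [map_add, hx, hy]
  | single p c => rw [toBar_single, single_eq_translate_ofBar p c, hψ]

lemma equivariant_hom_ext {n m : ℕ} {F F' : HomogChains G n →+ HomogChains G m}
    (hF : ∀ g x, F (translate g n x) = translate g m (F x))
    (hF' : ∀ g x, F' (translate g n x) = translate g m (F' x))
    (h : ∀ a, F (ofBar n (Finsupp.single a 1)) = F' (ofBar n (Finsupp.single a 1))) : F = F' :=
  finsupp_int_addHom_ext fun p => by rw [single_eq_translate_ofBar, hF, hF', h]

/-- `HomogChains G n` is the free `ℤ[G]`-module on the `ofBar [a]`; this is the equivariant map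
with prescribed values `φ a` on them. -/
def liftEquivariant {n m : ℕ} (φ : (Fin n → G) → HomogChains G m) :
    HomogChains G n →+ HomogChains G m :=
  Finsupp.liftAddHom fun p => zmultiplesHom _ (translate (p 0) m (φ (barSymbol p)))

lemma liftEquivariant_single {n m : ℕ} (φ : (Fin n → G) → HomogChains G m)
    (p : Fin (n + 1) → G) (c : ℤ) :
    liftEquivariant φ (Finsupp.single p c) = c • translate (p 0) m (φ (barSymbol p)) := by
  rw [liftEquivariant, Finsupp.liftAddHom_apply_single, zmultiplesHom_apply]

lemma liftEquivariant_translate {n m : ℕ} (φ : (Fin n → G) → HomogChains G m) (g : G)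
    (x : HomogChains G n) :
    liftEquivariant φ (translate g n x) = translate g m (liftEquivariant φ x) := by
  induction x using Finsupp.induction_linear with
  | zero => simp
  | add x y hx hy => simp only [map_add, hx, hy]
  | single p c =>
    rw [translate_single, liftEquivariant_single, liftEquivariant_single, barSymbol_smul,
      map_zsmul, translate_translate]
    rfl

lemma liftEquivariant_ofBar {n m : ℕ} (φ : (Fin n → G) → HomogChains G m) (a : Fin n → G) :
    liftEquivariant φ (ofBar n (Finsupp.single a 1)) = φ a := by
  rw [ofBar_single, liftEquivariant_single, barSymbol_partialProd, Fin.partialProd_zero,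
    translate_one, one_smul]

def descend {n m : ℕ} (f : HomogChains G n →+ HomogChains G m) : C G ℤ n →+ C G ℤ m :=
  (toBar m).comp (f.comp (ofBar n))

lemma barD_descend_add_descend_barD {n : ℕ}
    (h₀ : HomogChains G n →+ HomogChains G (n + 1))
    (h₁ : HomogChains G (n + 1) →+ HomogChains G (n + 2))
    (θ : HomogChains G (n + 1) →+ HomogChains G (n + 1))
    (h₀_translate : ∀ g x, h₀ (translate g n x) = translate g (n + 1) (h₀ x))
    (hθ : ∀ x, homogD (n + 1) (h₁ x) + h₀ (homogD n x) = θ x - x) (c : C G ℤ (n + 1)) :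
    barD G ℤ (n + 1) (descend h₁ c) + descend h₀ (barD G ℤ n c) = descend θ c - c := by
  simp only [descend, AddMonoidHom.comp_apply]
  set x := ofBar (n + 1) c
  have hc : toBar (n + 1) x = c := toBar_ofBar (n + 1) c
  -- `ofBar ∘ toBar` differs from the identity only by translations, which `h₀` commutes with
  have hh₀ : toBar (n + 1) (h₀ (ofBar n (barD G ℤ n c))) = toBar (n + 1) (h₀ (homogD n x)) := by
    rw [← hc, barD_toBar]
    exact map_ofBar_toBar ((toBar (n + 1)).comp h₀)
      (fun g y => by simp only [AddMonoidHom.comp_apply, h₀_translate, toBar_translate]) _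
  rw [hh₀, barD_toBar, eq_sub_of_add_eq (hθ x), map_sub, map_sub, hc]
  abel

end Homogeneous

namespace IntCyclic

noncomputable section

local notation "M" => Multiplicative ℤ

open Multiplicative

def vertex (m : ℤ) : HomogChains M 0 := Finsupp.single ![ofAdd m] 1

def edge (m : ℤ) : HomogChains M 1 := Finsupp.single ![ofAdd m, ofAdd (m + 1)] 1

/-- The edge path `0 → 1 → ⋯ → m`, traversed backwards when `m < 0`. -/
def path (m : ℤ) : HomogChains M 1 :=
  ∑ j ∈ Finset.range m.toNat, edge j - ∑ j ∈ Finset.range (-m).toNat, edge (-(j : ℤ) - 1)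

lemma path_zero : path 0 = 0 := by simp [path]

lemma path_add_one (m : ℤ) : path (m + 1) = path m + edge m := by
  rcases le_or_gt 0 m with hm | hm
  · have h₁ : (m + 1).toNat = m.toNat + 1 := by omega
    rw [path, path, h₁, Finset.sum_range_succ, Int.toNat_of_nonneg hm,
      show (-(m + 1)).toNat = 0 by omega, show (-m).toNat = 0 by omega]
    abel
  · have h₁ : (-m).toNat = (-(m + 1)).toNat + 1 := by omega
    rw [path, path, h₁, Finset.sum_range_succ, show (m + 1).toNat = 0 by omega,
      show m.toNat = 0 by omega, show -(((-(m + 1)).toNat : ℕ) : ℤ) - 1 = m by omega]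
    abel

lemma path_sub_one (m : ℤ) : path (m - 1) = path m - edge (m - 1) := by
  rw [eq_sub_iff_add_eq, ← path_add_one, sub_add_cancel]

lemma translate_edge (k m : ℤ) : translate (ofAdd k) 1 (edge m) = edge (k + m) := by
  rw [edge, edge, translate_single]
  congr 1
  ext j
  fin_cases j <;> simp [← ofAdd_add, add_assoc]

lemma path_add (k m : ℤ) : path (k + m) = path k + translate (ofAdd k) 1 (path m) := by
  induction m using Int.induction_on with
  | zero => rw [add_zero, path_zero, map_zero, add_zero]
  | succ m ih => rw [← add_assoc, path_add_one, ih, path_add_one, map_add, translate_edge, add_assoc]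
  | pred m ih =>
    rw [← add_sub_assoc, path_sub_one, ih, path_sub_one, map_sub, translate_edge, add_sub_assoc,
      add_sub_assoc k]

lemma homogD_zero_single (p : Fin 2 → M) (c : ℤ) :
    homogD 0 (Finsupp.single p c) = Finsupp.single ![p 1] c - Finsupp.single ![p 0] c := by
  have h₀ : p ∘ Fin.succAbove 0 = ![p 1] := by ext j; fin_cases j; rfl
  have h₁ : p ∘ Fin.succAbove 1 = ![p 0] := by ext j; fin_cases j; rfl
  rw [homogD_single, Fin.sum_univ_two, h₀, h₁]
  simp only [Fin.val_zero, Fin.val_one, pow_zero, pow_one, one_mul, neg_one_mul,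
    Finsupp.single_neg, sub_eq_add_neg]

lemma homogD_edge (m : ℤ) : homogD 0 (edge m) = vertex (m + 1) - vertex m :=
  homogD_zero_single _ _

lemma homogD_path (m : ℤ) : homogD 0 (path m) = vertex m - vertex 0 := by
  induction m using Int.induction_on with
  | zero => rw [path_zero, map_zero, sub_self]
  | succ m ih => rw [path_add_one, map_add, ih, homogD_edge]; abel
  | pred m ih => rw [path_sub_one, map_sub, ih, homogD_edge, sub_add_cancel]; abel

/-- The composite of the comparison maps to and from the resolution `0 → ℤ[M] → ℤ[M] → ℤ`. -/
def theta : (n : ℕ) → HomogChains M n →+ HomogChains M n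
  | 0 => AddMonoidHom.id _
  | 1 => Finsupp.liftAddHom fun p => zmultiplesHom _ (path (toAdd (p 1)) - path (toAdd (p 0)))
  | _ + 2 => 0

lemma theta_one_single (p : Fin 2 → M) (c : ℤ) :
    theta 1 (Finsupp.single p c) = c • (path (toAdd (p 1)) - path (toAdd (p 0))) := by
  rw [theta, Finsupp.liftAddHom_apply_single, zmultiplesHom_apply]

lemma theta_translate (n : ℕ) (g : M) (x : HomogChains M n) :
    theta n (translate g n x) = translate g n (theta n x) := by
  match n with
  | 0 => rfl
  | 1 =>
    induction x using Finsupp.induction_linear with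
    | zero => simp
    | add x y hx hy => simp only [map_add, hx, hy]
    | single p c =>
      rw [translate_single, theta_one_single, theta_one_single, map_zsmul, map_sub]
      simp only [Pi.smul_apply, smul_eq_mul, toAdd_mul, path_add, ofAdd_toAdd,
        add_sub_add_left_eq_sub]
  | _ + 2 => simp [theta]

lemma homogD_theta (n : ℕ) (x : HomogChains M (n + 1)) :
    homogD n (theta (n + 1) x) = theta n (homogD n x) := by
  match n with
  | 0 =>
    induction x using Finsupp.induction_linear with
    | zero => simp
    | add x y hx hy => simp only [map_add, hx, hy]
    | single p c =>
      rw [theta_one_single, map_zsmul, map_sub, homogD_path, homogD_path, homogD_zero_single,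
        sub_sub_sub_cancel_right, vertex, vertex, ofAdd_toAdd, ofAdd_toAdd, smul_sub,
        Finsupp.smul_single_one, Finsupp.smul_single_one]
      rfl
  | 1 =>
    rw [show theta 2 x = 0 from rfl, map_zero, eq_comm]
    induction x using Finsupp.induction_linear with
    | zero => simp
    | add x y hx hy => simp only [map_add, hx, hy, add_zero]
    | single p c =>
      rw [homogD_single, map_sum, Fin.sum_univ_three]
      simp only [theta_one_single, Function.comp_apply]
      simp [Fin.succAbove, Fin.lt_def, smul_sub]
      abel
  | _ + 2 => simp [theta]

/-- On a generator `y = ofBar [a]`, cone off the cycle `θ y - y - h (∂ y)`: the construction of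
the comparison theorem. -/
def homotopy : (n : ℕ) → HomogChains M n →+ HomogChains M (n + 1)
  | 0 => 0
  | n + 1 => liftEquivariant fun a =>
      let y := ofBar (n + 1) (Finsupp.single a 1)
      cone (n + 1) (theta (n + 1) y - y - homotopy n (homogD n y))

lemma homotopy_translate (n : ℕ) (g : M) (x : HomogChains M n) :
    homotopy n (translate g n x) = translate g (n + 1) (homotopy n x) := by
  match n with
  | 0 => simp [homotopy]
  | n + 1 => exact liftEquivariant_translate _ g x

lemma homogD_homotopy_add_of_cycle (n : ℕ)
    (hcycle : ∀ y, homogD n (theta (n + 1) y - y - homotopy n (homogD n y)) = 0)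
    (x : HomogChains M (n + 1)) :
    homogD (n + 1) (homotopy (n + 1) x) + homotopy n (homogD n x) = theta (n + 1) x - x := by
  have key : (homogD (n + 1)).comp (homotopy (n + 1)) + (homotopy n).comp (homogD n) =
      theta (n + 1) - AddMonoidHom.id _ := by
    refine equivariant_hom_ext (fun g x => ?_) (fun g x => ?_) fun a => ?_
    · simp only [AddMonoidHom.add_apply, AddMonoidHom.comp_apply, homotopy_translate,
        homogD_translate, map_add]
    · simp only [AddMonoidHom.sub_apply, AddMonoidHom.id_apply, theta_translate, map_sub]
    · simp only [AddMonoidHom.add_apply, AddMonoidHom.comp_apply, AddMonoidHom.sub_apply,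
        AddMonoidHom.id_apply]
      rw [homotopy, liftEquivariant_ofBar, homogD_cone, hcycle, map_zero, sub_zero]
      abel
  simpa using DFunLike.congr_fun key x

lemma homogD_homotopy_add (n : ℕ) (x : HomogChains M (n + 1)) :
    homogD (n + 1) (homotopy (n + 1) x) + homotopy n (homogD n x) = theta (n + 1) x - x := by
  induction n with
  | zero =>
    refine homogD_homotopy_add_of_cycle 0 (fun y => ?_) x
    rw [homotopy, AddMonoidHom.zero_apply, sub_zero, map_sub, homogD_theta]
    exact sub_self _
  | succ n ih =>
    refine homogD_homotopy_add_of_cycle (n + 1) (fun y => ?_) x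
    have hh := ih (homogD (n + 1) y)
    rw [homogD_homogD, map_zero, add_zero] at hh
    rw [map_sub, map_sub, hh, homogD_theta]
    abel

lemma toBar_path (m : ℤ) : toBar 1 (path m) = m • Finsupp.single ![ofAdd 1] 1 := by
  have hedge : ∀ k, toBar 1 (edge k) = Finsupp.single ![ofAdd 1] 1 := fun k => by
    rw [edge, toBar_single]
    congr 1
    ext j
    fin_cases j
    simp [barSymbol, ← ofAdd_neg, ← ofAdd_add]
  induction m using Int.induction_on with
  | zero => rw [path_zero, map_zero, zero_smul]
  | succ m ih => rw [path_add_one, map_add, ih, hedge, add_smul, one_smul]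
  | pred m ih => rw [path_sub_one, map_sub, ih, hedge, sub_smul, one_smul]

/-- The isomorphism `H₁(ℤ; ℤ) ≅ ℤ` on cycles: `[a] ↦ a`. -/
def weight : C M ℤ 1 →+ ℤ := Finsupp.liftAddHom fun a => zmultiplesHom ℤ (toAdd (a 0))

lemma weight_single (a : Fin 1 → M) (c : ℤ) : weight (Finsupp.single a c) = c * toAdd (a 0) := by
  rw [weight, Finsupp.liftAddHom_apply_single, zmultiplesHom_apply, smul_eq_mul]

lemma descend_theta_one (c : C M ℤ 1) :
    descend (theta 1) c = weight c • Finsupp.single ![ofAdd 1] 1 := by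
  induction c using Finsupp.induction_linear with
  | zero => simp
  | add x y hx hy => simp only [map_add, hx, hy, add_smul]
  | single a c =>
    have h₁ : Fin.partialProd a 1 = a 0 := by
      simpa using Fin.partialProd_succ a 0
    rw [descend, AddMonoidHom.comp_apply, AddMonoidHom.comp_apply, ofBar_single, theta_one_single,
      weight_single, map_zsmul, map_sub, toBar_path, toBar_path, h₁, Fin.partialProd_zero,
      toAdd_one, zero_smul, sub_zero, mul_smul]

lemma weight_qMap_neg_one (c : C M ℤ 1) : weight (qMap M ℤ ℤˣ (-1) 1 c) = -weight c := by
  induction c using Finsupp.induction_linear with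
  | zero => simp
  | add x y hx hy => simp only [map_add, hx, hy, neg_add]
  | single a c =>
    rw [qMap, chainMapOf_single, weight_single, weight_single,
      MulDistribMulAction.toMonoidHom_apply]
    change c * toAdd (a 0 ^ ((-1 : ℤˣ) : ℤ)) = _
    rw [Units.val_neg, Units.val_one, zpow_neg_one, toAdd_inv, mul_neg]

lemma descend_theta_sub_mem_boundaries (n : ℕ) {c : C M ℤ (n + 1)}
    (hc : c ∈ cycles M ℤ (n + 1)) : descend (theta (n + 1)) c - c ∈ boundaries M ℤ (n + 1) := by
  refine ⟨descend (homotopy (n + 1)) c, ?_⟩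
  have h := barD_descend_add_descend_barD (homotopy n) (homotopy (n + 1)) (theta (n + 1))
    (homotopy_translate n) (homogD_homotopy_add n) c
  rwa [show barD M ℤ n c = 0 from hc, map_zero, add_zero] at h

lemma mem_boundaries_of_mem_cycles (n : ℕ) {c : C M ℤ (n + 2)} (hc : c ∈ cycles M ℤ (n + 2)) :
    c ∈ boundaries M ℤ (n + 2) := by
  simpa [descend, theta] using descend_theta_sub_mem_boundaries (n + 1) hc

lemma mem_boundaries_of_weight_eq_zero {c : C M ℤ 1} (hc : c ∈ cycles M ℤ 1)
    (hw : weight c = 0) : c ∈ boundaries M ℤ 1 := by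
  simpa [descend_theta_one, hw] using descend_theta_sub_mem_boundaries 0 hc

lemma mem_boundaries_of_qMap_neg_one_eq (n : ℕ) {c : C M ℤ (n + 1)}
    (hc : c ∈ cycles M ℤ (n + 1)) (hinv : qMap M ℤ ℤˣ (-1) (n + 1) c = c) :
    c ∈ boundaries M ℤ (n + 1) := by
  match n with
  | 0 =>
    refine mem_boundaries_of_weight_eq_zero hc ?_
    have h := weight_qMap_neg_one c
    rw [hinv] at h
    omega
  | n + 1 => exact mem_boundaries_of_mem_cycles n hc

lemma inclHom_eq_zero (n : ℕ) (x : invHomology M ℤ ℤˣ (n + 1)) :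
    inclHom M ℤ ℤˣ (n + 1) x = 0 := by
  induction x using QuotientAddGroup.induction_on with
  | H c =>
    rw [inclHom, QuotientAddGroup.map_mk, QuotientAddGroup.eq_zero_iff,
      AddSubgroup.mem_addSubgroupOf]
    exact mem_boundaries_of_qMap_neg_one_eq n (inf_le_right (a := invC M ℤ ℤˣ (n + 1)) c.2)
      (mem_invC.mp (inf_le_left (a := invC M ℤ ℤˣ (n + 1)) c.2) (-1))

end

end IntCyclic

end IGC

/-- for `i ≥ 1`, `H_i^{ℤ/2}(ℤ;ℤ)` is 2-torsion, where `ℤ/2 = ℤˣ` acts on `ℤ`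
(written multiplicatively) by negation. -/
theorem stmt4 (i : ℕ) (hi : 1 ≤ i) (x : IGC.invHomology (Multiplicative ℤ) ℤ ℤˣ i) :
    2 • x = 0 := by
  obtain ⟨n, rfl⟩ := Nat.exists_eq_add_of_le' hi
  rw [show 2 = Fintype.card ℤˣ from rfl]
  exact IGC.card_nsmul_eq_zero_of_inclHom_eq_zero (IGC.IntCyclic.inclHom_eq_zero n x)
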